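/- Given a weak composition s and two s-tree-inversion sets I and J, the transitive closure tc(I ∪ J) is the smallest s-tree-inversion set containing both I and J. -/
import Mathlib


/-- Planar rooted trees: leaves are unlabeled; internal nodes carry a natural
number label and an ordered list of children. -/
inductive STree : Type where
  | leaf : STree
  | node : ℕ → List STree → STree

namespace STree

mutual
  /-- `x` occurs as the label of an internal node of the tree. -/
  def mem (x : ℕ) : STree → Bool
    | .leaf => false
    | .node a cs => x == a || memL x cs
  def memL (x : ℕ) : List STree → Bool
    | [] => false
    | t :: ts => mem x t || memL x ts
end

mutual
  /-- The list of internal node labels, in preorder. -/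
  def labels : STree → List ℕ
    | .leaf => []
    | .node a cs => a :: labelsL cs
  def labelsL : List STree → List ℕ
    | [] => []
    | t :: ts => labels t ++ labelsL ts
end

mutual
  /-- Local well-formedness for the signature `s` : an internal node labeled `a`
  has `s a + 1` children, and all labels below it are smaller than `a`. -/
  def wf (s : ℕ → ℕ) : STree → Prop
    | .leaf => True
    | .node a cs => cs.length = s a + 1 ∧ (∀ b ∈ labelsL cs, b < a) ∧ wfL s cs
  def wfL (s : ℕ → ℕ) : List STree → Prop
    | [] => True
    | t :: ts => wf s t ∧ wfL s ts
end

/-- `T` is an `s`-decreasing tree: its internal nodes are labeled bijectively by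
`1, …, n`, node `i` has `s i + 1` ordered children, and all descendants of a node
have smaller labels. -/
def IsSDecreasingTree (n : ℕ) (s : ℕ → ℕ) (T : STree) : Prop :=
  wf s T ∧ (labels T).Perm (List.range' 1 n)

/-- Index of the first tree of the list containing the label `x`. -/
def idxOf (x : ℕ) : List STree → ℕ
  | [] => 0
  | t :: ts => if mem x t then 0 else idxOf x ts + 1

mutual
  /-- The cardinality `card_T(y,x)` of the pair `(y,x)` in the tree:
  `0` if `x` is (weakly) left of `y`, `i` if `x` lies in the `i`-th child
  subtree of `y`, and `s y` if `x` is right of `y`. -/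
  def card (s : ℕ → ℕ) (y x : ℕ) : STree → ℕ
    | .leaf => 0
    | .node a cs => if a = y then idxOf x cs else cardL s y x cs
  def cardL (s : ℕ → ℕ) (y x : ℕ) : List STree → ℕ
    | [] => 0
    | t :: ts =>
      if mem y t then
        (if mem x t then card s y x t else if memL x ts then s y else 0)
      else (if mem x t then 0 else cardL s y x ts)
end

/-- The tree-inversion multiset of `T`, as a multiplicity function on pairs
`(y,x)` with `1 ≤ x < y ≤ n`. -/
def treeInv (n : ℕ) (s : ℕ → ℕ) (T : STree) : ℕ → ℕ → ℕ := fun y x =>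
  if 1 ≤ x ∧ x < y ∧ y ≤ n then card s y x T else 0

/-- A multi inversion set on `1, …, n` bounded by the weak composition `s`. -/
def IsMultiInvSet (n : ℕ) (s : ℕ → ℕ) (I : ℕ → ℕ → ℕ) : Prop :=
  (∀ y x, I y x ≤ s y) ∧ ∀ y x, ¬(1 ≤ x ∧ x < y ∧ y ≤ n) → I y x = 0

/-- Transitivity: for `a < b < c`, `card(c,b) = i` implies `card(b,a) = 0` or
`card(c,a) ≥ i`. -/
def InvTransitive (I : ℕ → ℕ → ℕ) : Prop :=
  ∀ a b c : ℕ, a < b → b < c → I b a = 0 ∨ I c b ≤ I c a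

/-- Planarity: for `a < b < c`, `card(c,a) = i` implies `card(b,a) = s b` or
`card(c,b) ≥ i`. -/
def InvPlanar (s : ℕ → ℕ) (I : ℕ → ℕ → ℕ) : Prop :=
  ∀ a b c : ℕ, a < b → b < c → I b a = s b ∨ I c a ≤ I c b

/-- An `s`-tree-inversion set: a bounded multi inversion set that is transitive
and planar. -/
def IsTreeInvSet (n : ℕ) (s : ℕ → ℕ) (I : ℕ → ℕ → ℕ) : Prop :=
  IsMultiInvSet n s I ∧ InvTransitive I ∧ InvPlanar s I

/-- Inclusion of multi inversion sets: pointwise comparison of multiplicities. -/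
def invLE (I J : ℕ → ℕ → ℕ) : Prop := ∀ y x, I y x ≤ J y x

/-- The `s`-weak order: inclusion of tree-inversion multisets. -/
def sWeakLE (n : ℕ) (s : ℕ → ℕ) (T R : STree) : Prop :=
  invLE (treeInv n s T) (treeInv n s R)

/-- Union of multi inversion sets: pointwise maximum. -/
def invUnion (I J : ℕ → ℕ → ℕ) : ℕ → ℕ → ℕ := fun y x => max (I y x) (J y x)

/-- Transitive closure: `tc I (c,a)` is the maximal value of `I (b₁, b₂)` over
all transitivity paths `c = b₁ > b₂ > … > b_k = a` (consecutive entries have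
positive multiplicity). -/
noncomputable def tc (I : ℕ → ℕ → ℕ) : ℕ → ℕ → ℕ := fun c a =>
  sSup {v | ∃ (b : ℕ) (l : List ℕ),
    List.Chain (fun u w => w < u ∧ 0 < I u w) c (b :: l) ∧
    (b :: l).getLast (List.cons_ne_nil b l) = a ∧ v = I c b}

/-- Adding the inversion `(c,a)`: increase its multiplicity by one. -/
def addInv (I : ℕ → ℕ → ℕ) (c a : ℕ) : ℕ → ℕ → ℕ := fun y x =>
  if y = c ∧ x = a then I y x + 1 else I y x

mutual
  /-- `a` is a (proper) descendant of the node labeled `c`. -/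
  def descIn (c a : ℕ) : STree → Bool
    | .leaf => false
    | .node b cs => (b == c && memL a cs) || descInL c a cs
  def descInL (c a : ℕ) : List STree → Bool
    | [] => false
    | t :: ts => descIn c a t || descInL c a ts
end

mutual
  /-- `a` belongs to the rightmost child subtree of the node labeled `c`. -/
  def inRight (c a : ℕ) : STree → Bool
    | .leaf => false
    | .node b cs =>
      (b == c && (match cs.getLast? with
        | some t => mem a t
        | none => false)) || inRightL c a cs
  def inRightL (c a : ℕ) : List STree → Bool
    | [] => false
    | t :: ts => inRight c a t || inRightL c a ts
end

mutual
  /-- `a` belongs to the leftmost child subtree of the node labeled `c`. -/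
  def inLeft (c a : ℕ) : STree → Bool
    | .leaf => false
    | .node b cs =>
      (b == c && (match cs.head? with
        | some t => mem a t
        | none => false)) || inLeftL c a cs
  def inLeftL (c a : ℕ) : List STree → Bool
    | [] => false
    | t :: ts => inLeft c a t || inLeftL c a ts
end

mutual
  /-- The rightmost child subtree of the node labeled `a` is empty (a leaf). -/
  def rightEmpty (a : ℕ) : STree → Bool
    | .leaf => false
    | .node b cs =>
      (b == a && (match cs.getLast? with
        | some .leaf => true
        | _ => false)) || rightEmptyL a cs
  def rightEmptyL (a : ℕ) : List STree → Bool
    | [] => false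
    | t :: ts => rightEmpty a t || rightEmptyL a ts
end

/-- `(a,c)` is a tree-ascent of `T`: `a` is a descendant of `c`, not in the
rightmost subtree of `c`; `a` lies in the rightmost subtree of any `b` with
`a < b < c` having `a` as a descendant; and if `s a > 0` the rightmost
(strict right) subtree of `a` is empty. -/
def IsTreeAscent (s : ℕ → ℕ) (T : STree) (a c : ℕ) : Prop :=
  a < c ∧ descIn c a T = true ∧ inRight c a T = false ∧
  (∀ b : ℕ, a < b → b < c → descIn b a T = true → inRight b a T = true) ∧
  (0 < s a → rightEmpty a T = true)

/-- `a` is the root label of the tree. -/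
def hasRoot (a : ℕ) : STree → Bool
  | .leaf => false
  | .node b _ => a == b

mutual
  /-- `a` is a direct child of the node `c`, but not its rightmost child. -/
  def nonRightChild (c a : ℕ) : STree → Bool
    | .leaf => false
    | .node b cs => (b == c && cs.dropLast.any (hasRoot a)) || nonRightChildL c a cs
  def nonRightChildL (c a : ℕ) : List STree → Bool
    | [] => false
    | t :: ts => nonRightChild c a t || nonRightChildL c a ts
end

/-- `(a,c)` is a Tamari-ascent of `T`: `a` is a non-right child of `c`. -/
def IsTamariAscent (T : STree) (a c : ℕ) : Prop :=
  a < c ∧ nonRightChild c a T = true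

mutual
  /-- Horizontal mirror image of a tree: the order of children is reversed at
  every internal node. -/
  def mirror : STree → STree
    | .leaf => .leaf
    | .node a cs => .node a (mirrorL cs)
  def mirrorL : List STree → List STree
    | [] => []
    | t :: ts => mirrorL ts ++ [mirror t]
end

/-- `T` is an `s`-Tamari tree: `card(c,a) ≤ card(c,b)` for all `a < b < c`. -/
def TamariProp (n : ℕ) (s : ℕ → ℕ) (T : STree) : Prop :=
  ∀ a b c : ℕ, a < b → b < c → treeInv n s T c a ≤ treeInv n s T c b

/-- `T` is an `s`-maximal-Tamari tree: `card(b,a) = s b` implies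
`card(c,a) = s c` for all `c > b`. -/
def MaxTamariProp (n : ℕ) (s : ℕ → ℕ) (T : STree) : Prop :=
  ∀ a b c : ℕ, 1 ≤ a → a < b → b < c → c ≤ n →
    treeInv n s T b a = s b → treeInv n s T c a = s c

/-- The projection `π↓` on inversion sets:
`card_Q(c,a) = min { card_T(c,b) : a ≤ b < c }`. -/
noncomputable def pidownInv (n : ℕ) (s : ℕ → ℕ) (T : STree) : ℕ → ℕ → ℕ :=
  fun c a => sInf {v | ∃ b : ℕ, a ≤ b ∧ b < c ∧ v = treeInv n s T c b}

open scoped Classical in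
/-- The projection `π↑` on inversion sets: `card_R(c,a) = s c` if there is
`a < b < c` with `card_T(b,a) = s b`, and `card_R(c,a) = card_T(c,a)` otherwise. -/
noncomputable def piupInv (n : ℕ) (s : ℕ → ℕ) (T : STree) : ℕ → ℕ → ℕ :=
  fun c a =>
    if 1 ≤ a ∧ a < c ∧ c ≤ n then
      if ∃ b : ℕ, a < b ∧ b < c ∧ treeInv n s T b a = s b then s c
      else treeInv n s T c a
    else 0

end STree

namespace STreeAux
open STree

/-- The set whose supremum defines `tc`. -/
def tcSet (U : ℕ → ℕ → ℕ) (c a : ℕ) : Set ℕ :=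
  {v | ∃ (b : ℕ) (l : List ℕ),
    List.Chain (fun u w => w < u ∧ 0 < U u w) c (b :: l) ∧
    (b :: l).getLast (List.cons_ne_nil b l) = a ∧ v = U c b}

theorem tc_eq (U : ℕ → ℕ → ℕ) (c a : ℕ) : tc U c a = sSup (tcSet U c a) := rfl

theorem bdd {U : ℕ → ℕ → ℕ} {s : ℕ → ℕ} (hU : ∀ y x, U y x ≤ s y) (c a : ℕ) :
    BddAbove (tcSet U c a) := by
  refine ⟨s c, fun v hv => ?_⟩
  obtain ⟨b, l, _, _, rfl⟩ := hv
  exact hU c b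

theorem mem_le_tc {U : ℕ → ℕ → ℕ} {s : ℕ → ℕ} (hU : ∀ y x, U y x ≤ s y)
    {c a v : ℕ} (h : v ∈ tcSet U c a) : v ≤ tc U c a :=
  le_csSup (bdd hU c a) h

theorem tc_le {U : ℕ → ℕ → ℕ} {c a m : ℕ}
    (h : ∀ v ∈ tcSet U c a, v ≤ m) : tc U c a ≤ m :=
  csSup_le' (fun v hv => h v hv)

/-- The last element of a chain is positive and below the start. -/
theorem chain_last {U : ℕ → ℕ → ℕ} (hpos : ∀ y x, 0 < U y x → 1 ≤ x) :
    ∀ (l : List ℕ) (d : ℕ), List.Chain (fun u w => w < u ∧ 0 < U u w) d l →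
      ∀ (h : l ≠ []), 1 ≤ l.getLast h ∧ l.getLast h < d
  | [], _, _, h => absurd rfl h
  | [e], d, hc, _ => by
      rcases List.chain_cons.mp hc with ⟨⟨hlt, hp⟩, _⟩
      exact ⟨hpos _ _ hp, hlt⟩
  | e :: e' :: l, d, hc, _ => by
      rcases List.chain_cons.mp hc with ⟨⟨hlt, _⟩, hc'⟩
      have H := chain_last hpos (e' :: l) e hc' (List.cons_ne_nil _ _)
      rw [List.getLast_cons (List.cons_ne_nil _ _)]
      exact ⟨H.1, H.2.trans hlt⟩

theorem chain_append {R : ℕ → ℕ → Prop} :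
    ∀ (l₁ : List ℕ) (x : ℕ), List.Chain R x l₁ → ∀ (h : l₁ ≠ []),
      ∀ (l₂ : List ℕ), List.Chain R (l₁.getLast h) l₂ → List.Chain R x (l₁ ++ l₂)
  | [], _, _, h, _, _ => absurd rfl h
  | [e], _, hc, _, l₂, h₂ => by
      rcases List.chain_cons.mp hc with ⟨hxe, _⟩
      exact List.chain_cons.mpr ⟨hxe, h₂⟩
  | e :: e' :: l, x, hc, _, l₂, h₂ => by
      rcases List.chain_cons.mp hc with ⟨hxe, hc'⟩
      rw [List.getLast_cons (List.cons_ne_nil _ _)] at h₂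
      exact List.chain_cons.mpr ⟨hxe, chain_append (e' :: l) e hc' (List.cons_ne_nil _ _) l₂ h₂⟩

theorem getLast_append' :
    ∀ (l₁ l₂ : List ℕ) (h₂ : l₂ ≠ []) (h : l₁ ++ l₂ ≠ []),
      (l₁ ++ l₂).getLast h = l₂.getLast h₂
  | [], _, _, _ => rfl
  | e :: l, l₂, h₂, h => by
      have hne : l ++ l₂ ≠ [] := by
        cases l₂ with
        | nil => exact absurd rfl h₂
        | cons a t => simp
      exact (List.getLast_cons hne).trans (getLast_append' l l₂ h₂ hne)

/-- Monotonicity of a transitive inversion set along a positive path. -/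
theorem path_mono {U K : ℕ → ℕ → ℕ} (hKt : InvTransitive K)
    (hp : ∀ u w, 0 < U u w → 0 < K u w) (c : ℕ) :
    ∀ (l : List ℕ) (d b₀ : ℕ), b₀ ≤ c →
      List.Chain (fun u w => w < u ∧ 0 < U u w) b₀ (d :: l) →
      K c d ≤ K c ((d :: l).getLast (List.cons_ne_nil d l))
  | [], _, _, _, _ => le_refl _
  | e :: l, d, b₀, hb₀, hc => by
      rcases List.chain_cons.mp hc with ⟨⟨hdb, _⟩, hc'⟩
      rcases List.chain_cons.mp hc' with ⟨⟨hed, hUde⟩, _⟩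
      have hdc : d < c := lt_of_lt_of_le hdb hb₀
      have step : K c d ≤ K c e := by
        rcases hKt e d c hed hdc with h0 | hle
        · have := hp _ _ hUde; omega
        · exact hle
      rw [List.getLast_cons (List.cons_ne_nil _ _)]
      exact le_trans step (path_mono hKt hp c l e d (le_of_lt hdc) hc')

/-- Planarity core: from a positive path from `d` down to `a` with `b` strictly
between, one can build a positive path from `d` down to `b`, provided
`tc (I ∪ J) b a < s b`. -/
theorem reach_b {n : ℕ} {s : ℕ → ℕ} {I J : ℕ → ℕ → ℕ}
    (hI : IsTreeInvSet n s I) (hJ : IsTreeInvSet n s J) {a b : ℕ}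
    (hab : a < b) (hba : tc (invUnion I J) b a < s b) :
    ∀ (l : List ℕ) (d : ℕ),
      List.Chain (fun u w => w < u ∧ 0 < invUnion I J u w) d l →
      ∀ (h : l ≠ []), l.getLast h = a → b < d →
      ∃ (e : ℕ) (l' : List ℕ),
        List.Chain (fun u w => w < u ∧ 0 < invUnion I J u w) d (e :: l') ∧
        (e :: l').getLast (List.cons_ne_nil e l') = b := by
  have hUbd : ∀ y x, invUnion I J y x ≤ s y := fun y x => max_le (hI.1.1 y x) (hJ.1.1 y x)
  intro l
  induction l with
  | nil => intro d _ h; exact absurd rfl h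
  | cons e l₂ ih =>
    intro d hc h hlast hbd
    rcases List.chain_cons.mp hc with ⟨⟨hed, hUde⟩, hc₂⟩
    rcases lt_trichotomy e b with heb | heb | heb
    · -- gap : e < b < d
      have hcontra : ∀ X : ℕ → ℕ → ℕ, (∀ y x, X y x ≤ invUnion I J y x) → X b e ≠ s b := by
        intro X hXle hfb
        have hsb : 0 < s b := lt_of_le_of_lt (Nat.zero_le _) hba
        have hUbe : 0 < invUnion I J b e := lt_of_lt_of_le hsb (hfb ▸ hXle b e)
        have hmem : invUnion I J b e ∈ tcSet (invUnion I J) b a :=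
          ⟨e, l₂, List.chain_cons.mpr ⟨⟨heb, hUbe⟩, hc₂⟩, hlast, rfl⟩
        have h1 := mem_le_tc hUbd hmem
        have h2 : s b ≤ invUnion I J b e := hfb ▸ hXle b e
        omega
      have hUdb : 0 < invUnion I J d b := by
        rcases Nat.eq_zero_or_pos (I d e) with h0 | hIde
        · have hJde : 0 < J d e := by
            have h' := hUde
            simp only [invUnion, h0, Nat.max_eq_right (Nat.zero_le _)] at h'
            exact h'
          rcases hJ.2.2 e b d heb hbd with hfb | hle
          · exact absurd hfb (hcontra J (fun y x => le_max_right _ _))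
          · exact lt_of_lt_of_le hJde (le_trans hle (le_max_right _ _))
        · rcases hI.2.2 e b d heb hbd with hfb | hle
          · exact absurd hfb (hcontra I (fun y x => le_max_left _ _))
          · exact lt_of_lt_of_le hIde (le_trans hle (le_max_left _ _))
      exact ⟨b, [], List.chain_cons.mpr ⟨⟨hbd, hUdb⟩, List.Chain.nil⟩, rfl⟩
    · exact ⟨e, [], List.chain_cons.mpr ⟨⟨hed, hUde⟩, List.Chain.nil⟩, heb⟩
    · have hl₂ : l₂ ≠ [] := by
        rintro rfl
        have he : e = a := hlast
        omega
      rw [List.getLast_cons hl₂] at hlast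
      obtain ⟨e', l', hch', hlast'⟩ := ih e hc₂ hl₂ hlast heb
      exact ⟨e, e' :: l', List.chain_cons.mpr ⟨⟨hed, hUde⟩, hch'⟩,
        by rw [List.getLast_cons (List.cons_ne_nil _ _)]; exact hlast'⟩

end STreeAux


open STree in
/-- For `s`-tree-inversion sets `I` and `J`, `tc (I ∪ J)` is the smallest
`s`-tree-inversion set containing both `I` and `J`. -/
theorem tc_union_smallest (n : ℕ) (s : ℕ → ℕ) (I J : ℕ → ℕ → ℕ)
    (hI : IsTreeInvSet n s I) (hJ : IsTreeInvSet n s J) :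
    IsTreeInvSet n s (tc (invUnion I J)) ∧
    invLE I (tc (invUnion I J)) ∧
    invLE J (tc (invUnion I J)) ∧
    ∀ K : ℕ → ℕ → ℕ, IsTreeInvSet n s K →
      invLE I K → invLE J K → invLE (tc (invUnion I J)) K := by
  classical
  have hUbd : ∀ y x, invUnion I J y x ≤ s y := fun y x => max_le (hI.1.1 y x) (hJ.1.1 y x)
  have hUz : ∀ y x, ¬(1 ≤ x ∧ x < y ∧ y ≤ n) → invUnion I J y x = 0 := by
    intro y x h
    simp [invUnion, hI.1.2 y x h, hJ.1.2 y x h]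
  have hUpos : ∀ y x, 0 < invUnion I J y x → 1 ≤ x ∧ x < y ∧ y ≤ n := by
    intro y x h
    by_contra hc
    rw [hUz y x hc] at h
    exact absurd h (lt_irrefl 0)
  have hIle : ∀ y x, I y x ≤ invUnion I J y x := fun y x => le_max_left _ _
  have hJle : ∀ y x, J y x ≤ invUnion I J y x := fun y x => le_max_right _ _
  have hA1 : ∀ y x, tc (invUnion I J) y x ≤ s y := by
    intro y x
    refine STreeAux.tc_le ?_
    rintro v ⟨b, l, _, _, rfl⟩
    exact hUbd y b
  have hA2 : ∀ y x, ¬(1 ≤ x ∧ x < y ∧ y ≤ n) → tc (invUnion I J) y x = 0 := by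
    intro y x h
    have hempty : STreeAux.tcSet (invUnion I J) y x = ∅ := by
      ext v
      simp only [Set.mem_empty_iff_false, iff_false]
      rintro ⟨b, l, hc, hlast, rfl⟩
      rcases List.chain_cons.mp hc with ⟨⟨hby, hUyb⟩, _⟩
      have h1 := STreeAux.chain_last (fun u w hw => (hUpos u w hw).1) (b :: l) y hc
        (List.cons_ne_nil _ _)
      rw [hlast] at h1
      exact h ⟨h1.1, h1.2, (hUpos y b hUyb).2.2⟩
    rw [STreeAux.tc_eq, hempty, csSup_empty]
    rfl
  have hTrans : InvTransitive (tc (invUnion I J)) := by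
    intro a b c hab hbc
    by_cases hne : (STreeAux.tcSet (invUnion I J) b a).Nonempty
    · right
      obtain ⟨v₀, b₁, l₁, hcb, hlb, _⟩ := hne
      refine STreeAux.tc_le ?_
      rintro v ⟨b₂, l₂, hc2, hl2, rfl⟩
      refine STreeAux.mem_le_tc hUbd ?_
      refine ⟨b₂, l₂ ++ b₁ :: l₁, ?_, ?_, rfl⟩
      · exact STreeAux.chain_append (b₂ :: l₂) c hc2 (List.cons_ne_nil _ _) (b₁ :: l₁)
          (by rw [hl2]; exact hcb)
      · exact (STreeAux.getLast_append' (b₂ :: l₂) (b₁ :: l₁) (List.cons_ne_nil _ _)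
          (by simp)).trans hlb
    · left
      rw [STreeAux.tc_eq, Set.not_nonempty_iff_eq_empty.mp hne, csSup_empty]
      rfl
  have hPlan : InvPlanar s (tc (invUnion I J)) := by
    intro a b c hab hbc
    by_cases hfull : tc (invUnion I J) b a = s b
    · exact Or.inl hfull
    right
    have hba : tc (invUnion I J) b a < s b := lt_of_le_of_ne (hA1 b a) hfull
    refine STreeAux.tc_le ?_
    rintro v ⟨d, l, hch, hlast, rfl⟩
    rcases List.chain_cons.mp hch with ⟨⟨hdc, hUcd⟩, hcl⟩
    rcases lt_trichotomy d b with hdb | hdb | hdb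
    · -- gap at the top : d < b < c
      have key : ∀ X : ℕ → ℕ → ℕ, IsTreeInvSet n s X →
          (∀ y x, X y x ≤ invUnion I J y x) → X c d ≤ tc (invUnion I J) c b := by
        intro X hX hXle
        rcases Nat.eq_zero_or_pos (X c d) with h0 | hXcd
        · simp [h0]
        rcases hX.2.2 d b c hdb hbc with hfb | hle
        · exfalso
          have hsb : 0 < s b := lt_of_le_of_lt (Nat.zero_le _) hba
          have hUbd' : 0 < invUnion I J b d := lt_of_lt_of_le hsb (hfb ▸ hXle b d)
          have hmem : invUnion I J b d ∈ STreeAux.tcSet (invUnion I J) b a :=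
            ⟨d, l, List.chain_cons.mpr ⟨⟨hdb, hUbd'⟩, hcl⟩, hlast, rfl⟩
          have h1 := STreeAux.mem_le_tc hUbd hmem
          have h2 : s b ≤ invUnion I J b d := hfb ▸ hXle b d
          omega
        · have hUcb : 0 < invUnion I J c b :=
            lt_of_lt_of_le hXcd (le_trans hle (hXle c b))
          have hmem : invUnion I J c b ∈ STreeAux.tcSet (invUnion I J) c b :=
            ⟨b, [], List.chain_cons.mpr ⟨⟨hbc, hUcb⟩, List.Chain.nil⟩, rfl, rfl⟩
          exact le_trans (le_trans hle (hXle c b)) (STreeAux.mem_le_tc hUbd hmem)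
      exact max_le (key I hI hIle) (key J hJ hJle)
    · -- d = b
      refine STreeAux.mem_le_tc hUbd ⟨d, [], ?_, hdb, rfl⟩
      exact List.chain_cons.mpr ⟨⟨hdc, hUcd⟩, List.Chain.nil⟩
    · -- b < d
      have hl : l ≠ [] := by
        rintro rfl
        have hda : d = a := hlast
        omega
      rw [List.getLast_cons hl] at hlast
      obtain ⟨e, l', hch', hlast'⟩ := STreeAux.reach_b hI hJ hab hba l d hcl hl hlast hdb
      refine STreeAux.mem_le_tc hUbd ⟨d, e :: l', ?_, ?_, rfl⟩
      · exact List.chain_cons.mpr ⟨⟨hdc, hUcd⟩, hch'⟩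
      · rw [List.getLast_cons (List.cons_ne_nil _ _)]
        exact hlast'
  have hIinc : invLE I (tc (invUnion I J)) := by
    intro y x
    rcases Nat.eq_zero_or_pos (I y x) with h0 | hp
    · simp [h0]
    have hU : 0 < invUnion I J y x := lt_of_lt_of_le hp (hIle y x)
    obtain ⟨h1, h2, h3⟩ := hUpos y x hU
    exact le_trans (hIle y x) (STreeAux.mem_le_tc hUbd
      ⟨x, [], List.chain_cons.mpr ⟨⟨h2, hU⟩, List.Chain.nil⟩, rfl, rfl⟩)
  have hJinc : invLE J (tc (invUnion I J)) := by
    intro y x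
    rcases Nat.eq_zero_or_pos (J y x) with h0 | hp
    · simp [h0]
    have hU : 0 < invUnion I J y x := lt_of_lt_of_le hp (hJle y x)
    obtain ⟨h1, h2, h3⟩ := hUpos y x hU
    exact le_trans (hJle y x) (STreeAux.mem_le_tc hUbd
      ⟨x, [], List.chain_cons.mpr ⟨⟨h2, hU⟩, List.Chain.nil⟩, rfl, rfl⟩)
  refine ⟨⟨⟨hA1, hA2⟩, hTrans, hPlan⟩, hIinc, hJinc, ?_⟩
  intro K hK hIK hJK y x
  have hUK : ∀ u w, invUnion I J u w ≤ K u w := fun u w => max_le (hIK u w) (hJK u w)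
  refine STreeAux.tc_le ?_
  rintro v ⟨d, l, hch, hlast, rfl⟩
  have hmono := STreeAux.path_mono hK.2.1 (fun u w h => lt_of_lt_of_le h (hUK u w)) y l d y
    le_rfl hch
  rw [hlast] at hmono
  exact le_trans (hUK y d) hmono
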